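/- arXiv:2008.06023 — 2 statements merged into one kernel-verified Lean document; each statement's English description precedes it below -/
import Mathlib

section
/- Let β, γ, λ, M, q > 0 and ω* ≥ 0 with 0 < β - γ < γ/ω*. Then the point (Ē, Ī, ω̄, P̄_I, P̄_ω) = ((M/λ)·r^{1/q}, (M/γ)·r^{1/q}, (β-γ)/β, (β-γ)/(β-ω*(β-γ)), (β-γ)/β), where r = (β-γ)/(γ-ω*(β-γ)), is an equilibrium of the two-delay system dE/dt = β(1-ω)I - λE, dI/dt = λE - γI, dω/dt = k_ω(P_I(1-ω*P_ω) - ω), dP_I/dt = k_{P_I}((λE)^q/(M^q+(λE)^q) - P_I), dP_ω/dt = k_{P_ω}(ω - P_ω), and all five coordinates lie in (0, ∞) with ω̄, P̄_I, P̄_ω ∈ (0,1). -/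
/-!
At equilibrium the infection equations force `λĒ = γĪ` and `β(1 - ω̄) = γ`, so `ω̄ = P̄_ω = (β - γ)/β`.
Since `λĒ = M r^{1/q}`, the Hill response `(λĒ)^q / (M^q + (λĒ)^q)` equals `r / (1 + r)`, and `r` is
chosen so that this is `(β - γ)/(β - ω*(β - γ)) = P̄_I`; the behaviour equation `ω̄ = P̄_I (1 - ω* P̄_ω)`
is then an identity. The endemic condition `0 < β - γ < γ/ω*` makes every denominator positive.
-/

open Real

theorem hill_mul_rpow_one_div {M r q : ℝ} (hM : 0 < M) (hr : 0 ≤ r) (hq : q ≠ 0) :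
    (M * r ^ (1 / q)) ^ q / (M ^ q + (M * r ^ (1 / q)) ^ q) = r / (1 + r) := by
  have hMq : M ^ q ≠ 0 := (rpow_pos_of_pos hM q).ne'
  rw [mul_rpow hM.le (rpow_nonneg hr _), one_div, rpow_inv_rpow hr hq, ← mul_one_add,
    mul_div_mul_left _ _ hMq]

theorem div_div_one_add_div {K : Type*} [Field K] (a : K) {b : K} (hb : b ≠ 0) :
    a / b / (1 + a / b) = a / (b + a) := by
  rw [one_add_div hb, div_div_div_cancel_right₀ hb]

theorem div_one_add_self_mem_Ioo {r : ℝ} (hr : 0 < r) : r / (1 + r) ∈ Set.Ioo 0 1 :=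
  ⟨by positivity, (div_lt_one (by positivity)).mpr (by linarith)⟩

theorem endemic_equilibrium_two_delay_general
    (β γ l M q kw kPI kpw w : ℝ)
    (hγ : 0 < γ) (hl : 0 < l) (hM : 0 < M) (hq : 0 < q)
    (hout : 0 < β - γ) (hctrl : w * (β - γ) < γ) :
    let r : ℝ := (β - γ) / (γ - w * (β - γ))
    let Ebar : ℝ := (M / l) * r ^ (1 / q)
    let Ibar : ℝ := (M / γ) * r ^ (1 / q)
    let ωbar : ℝ := (β - γ) / β
    let PIbar : ℝ := (β - γ) / (β - w * (β - γ))
    let Pωbar : ℝ := (β - γ) / β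
    (β * (1 - ωbar) * Ibar - l * Ebar = 0) ∧
    (l * Ebar - γ * Ibar = 0) ∧
    (kw * (PIbar * (1 - w * Pωbar) - ωbar) = 0) ∧
    (kPI * ((l * Ebar) ^ q / (M ^ q + (l * Ebar) ^ q) - PIbar) = 0) ∧
    (kpw * (ωbar - Pωbar) = 0) ∧
    0 < Ebar ∧ 0 < Ibar ∧
    ωbar ∈ Set.Ioo (0 : ℝ) 1 ∧ PIbar ∈ Set.Ioo (0 : ℝ) 1 ∧ Pωbar ∈ Set.Ioo (0 : ℝ) 1 := by
  intro r Ebar Ibar ωbar PIbar Pωbar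
  have hβ : 0 < β := by linarith
  have hrden : 0 < γ - w * (β - γ) := sub_pos.mpr hctrl
  have hr : 0 < r := div_pos hout hrden
  have hlE : l * Ebar = M * r ^ (1 / q) := by
    rw [← mul_assoc, mul_div_cancel₀ M hl.ne']
  have hγI : γ * Ibar = M * r ^ (1 / q) := by
    rw [← mul_assoc, mul_div_cancel₀ M hγ.ne']
  have hβω : β * (1 - ωbar) = γ := by
    simp only [ωbar]
    field_simp
    ring
  have hPI : PIbar = r / (1 + r) := by
    rw [div_div_one_add_div _ hrden.ne']
    exact congrArg _ (by ring)
  have hω : ωbar ∈ Set.Ioo (0 : ℝ) 1 := ⟨div_pos hout hβ, (div_lt_one hβ).mpr (by linarith)⟩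
  refine ⟨by rw [hβω, hγI, hlE, sub_self], by rw [hlE, hγI, sub_self], ?_, ?_, by simp [ωbar, Pωbar],
    by positivity, by positivity, hω, hPI ▸ div_one_add_self_mem_Ioo hr, hω⟩
  · have hB : β - w * (β - γ) ≠ 0 := by linarith
    have hsusceptible : 1 - w * Pωbar = (β - w * (β - γ)) / β := by
      rw [← mul_div_assoc, one_sub_div hβ.ne']
    rw [hsusceptible, div_mul_div_cancel₀ hB, sub_self, mul_zero]
  · rw [hlE, hill_mul_rpow_one_div hM hr.le hq.ne', hPI, sub_self, mul_zero]

/-- The endemic point is an equilibrium of the two-delay system, with all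
coordinates positive and the behavioral coordinates in (0,1). -/
theorem endemic_equilibrium_two_delay
    (β γ l M q kw kPI kpw w : ℝ)
    (hβ : 0 < β) (hγ : 0 < γ) (hl : 0 < l) (hM : 0 < M) (hq : 0 < q)
    (hkw : 0 < kw) (hkPI : 0 < kPI) (hkpw : 0 < kpw) (hw : 0 ≤ w)
    (hout : 0 < β - γ) (hctrl : w * (β - γ) < γ) :
    let r : ℝ := (β - γ) / (γ - w * (β - γ))
    let Ebar : ℝ := (M / l) * r ^ (1 / q)
    let Ibar : ℝ := (M / γ) * r ^ (1 / q)
    let ωbar : ℝ := (β - γ) / β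
    let PIbar : ℝ := (β - γ) / (β - w * (β - γ))
    let Pωbar : ℝ := (β - γ) / β
    (β * (1 - ωbar) * Ibar - l * Ebar = 0) ∧
    (l * Ebar - γ * Ibar = 0) ∧
    (kw * (PIbar * (1 - w * Pωbar) - ωbar) = 0) ∧
    (kPI * ((l * Ebar) ^ q / (M ^ q + (l * Ebar) ^ q) - PIbar) = 0) ∧
    (kpw * (ωbar - Pωbar) = 0) ∧
    0 < Ebar ∧ 0 < Ibar ∧
    ωbar ∈ Set.Ioo (0 : ℝ) 1 ∧ PIbar ∈ Set.Ioo (0 : ℝ) 1 ∧ Pωbar ∈ Set.Ioo (0 : ℝ) 1 :=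
  endemic_equilibrium_two_delay_general β γ l M q kw kPI kpw w hγ hl hM hq hout hctrl
end

section
/- Suppose E(t), I(t) are nonnegative differentiable functions on [0,∞) solving the reduced no-delay system in the uncontrolled regime (β - γ > γ/ω*, all parameters positive) with E(0) > 0, and suppose E(t) + I(t) is bounded above. Then E(t) + I(t) converges as t → ∞, and if additionally any finite limit point of (E(t), I(t)) must be an equilibrium and the only nonnegative equilibrium is (0,0), a contradiction follows with the strict monotonicity of E + I from E(0) + I(0) > 0. Hence E(t) + I(t) → ∞. -/
/-!
In the uncontrolled regime the perceived transmission rate never drops below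
`β ω* / (1 + ω*) > γ` (`ω*` is `w` below), so `(E + I)' = (rate - γ) I ≥ 0` and `E + I` is monotone. If it were
bounded it would converge to some `L ≥ E(0) + I(0) > 0`; but the trajectory then stays in a
compact box, so it has a cluster point, which must be the equilibrium `(0, 0)` and forces `L = 0`.
-/

open Filter Set Topology

noncomputable def transmissionRate (β l M q w E : ℝ) : ℝ :=
  β * (1 - (l * E) ^ q / (M ^ q + (1 + w) * (l * E) ^ q))

lemma div_add_mul_le_inv {m c x : ℝ} (hm : 0 ≤ m) (hc : 0 < c) (hx : 0 ≤ x) :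
    x / (m + c * x) ≤ c⁻¹ := by
  rcases (add_nonneg hm (mul_nonneg hc.le hx)).eq_or_lt with hD | hD
  · rw [← hD, div_zero]
    positivity
  · rw [div_le_iff₀ hD]
    field_simp
    linarith

lemma lt_transmissionRate {β γ l M q w E : ℝ} (hβ : 0 ≤ β) (hl : 0 ≤ l) (hM : 0 ≤ M)
    (hw : 0 < w) (huncont : γ / w < β - γ) (hE : 0 ≤ E) :
    γ < transmissionRate β l M q w E := by
  have hsat : (l * E) ^ q / (M ^ q + (1 + w) * (l * E) ^ q) ≤ (1 + w)⁻¹ :=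
    div_add_mul_le_inv (Real.rpow_nonneg hM q) (by linarith)
      (Real.rpow_nonneg (mul_nonneg hl hE) q)
  have hγ : γ < β * (1 - (1 + w)⁻¹) := by
    rw [div_lt_iff₀ hw] at huncont
    field_simp
    linarith
  calc γ < β * (1 - (1 + w)⁻¹) := hγ
    _ ≤ transmissionRate β l M q w E := by unfold transmissionRate; gcongr

lemma monotone_add_of_hasDerivAt {E I b : ℝ → ℝ} {l γ : ℝ}
    (hE : ∀ t, HasDerivAt E (b t * I t - l * E t) t)
    (hI : ∀ t, HasDerivAt I (l * E t - γ * I t) t)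
    (hb : ∀ t, γ ≤ b t) (hInn : ∀ t, 0 ≤ I t) :
    Monotone fun t => E t + I t := by
  refine monotone_of_hasDerivAt_nonneg (f' := fun t => b t * I t - l * E t + (l * E t - γ * I t))
    (fun t => (hE t).add (hI t)) fun t => show (0 : ℝ) ≤ _ from ?_
  nlinarith [mul_le_mul_of_nonneg_right (hb t) (hInn t)]

lemma exists_mapClusterPt_of_bddAbove_add {α : Type*} (F : Filter α) [F.NeBot]
    {E I : α → ℝ} (hEnn : ∀ t, 0 ≤ E t) (hInn : ∀ t, 0 ≤ I t)
    (hbdd : BddAbove (range fun t => E t + I t)) :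
    ∃ p : ℝ × ℝ, (0 ≤ p.1 ∧ 0 ≤ p.2) ∧ MapClusterPt p F fun t => (E t, I t) := by
  obtain ⟨B, hB⟩ := hbdd
  have hmem : ∀ t, (E t, I t) ∈ Icc 0 B ×ˢ Icc 0 B := fun t => by
    have := hB ⟨t, rfl⟩
    exact ⟨⟨hEnn t, by linarith [hInn t]⟩, ⟨hInn t, by linarith [hEnn t]⟩⟩
  obtain ⟨p, hpK, hp⟩ := (isCompact_Icc.prod isCompact_Icc).exists_mapClusterPt_of_frequently
    (Frequently.of_forall (f := F) hmem)
  exact ⟨p, ⟨hpK.1.1, hpK.2.1⟩, hp⟩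

lemma MapClusterPt.add_eq_of_tendsto {α : Type*} {F : Filter α} {E I : α → ℝ} {p : ℝ × ℝ}
    {L : ℝ} (hp : MapClusterPt p F fun t => (E t, I t))
    (hL : Tendsto (fun t => E t + I t) F (𝓝 L)) : p.1 + p.2 = L :=
  eq_of_nhds_neBot ((hp.tendsto_comp (continuous_add.tendsto p)).clusterPt.mono hL).neBot

theorem uncontrolled_total_infection_unbounded_general
    (β γ l M q w : ℝ) (hβ : 0 < β) (hl : 0 < l) (hM : 0 < M)
    (hw : 0 < w) (huncont : γ / w < β - γ)
    (E I : ℝ → ℝ)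
    (hE : ∀ t, HasDerivAt E
      (β * (1 - (l * E t) ^ q / (M ^ q + (1 + w) * (l * E t) ^ q)) * I t - l * E t) t)
    (hI : ∀ t, HasDerivAt I (l * E t - γ * I t) t)
    (hEnn : ∀ t, 0 ≤ E t) (hInn : ∀ t, 0 ≤ I t)
    (hE0 : 0 < E 0)
    (hconv : BddAbove (Set.range fun t => E t + I t) →
      ∃ L : ℝ, Tendsto (fun t => E t + I t) atTop (nhds L))
    (hcluster : ∀ p : ℝ × ℝ,
      MapClusterPt p atTop (fun t => (E t, I t)) →
      β * (1 - (l * p.1) ^ q / (M ^ q + (1 + w) * (l * p.1) ^ q)) * p.2 - l * p.1 = 0 ∧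
      l * p.1 - γ * p.2 = 0)
    (heq : ∀ E' I' : ℝ, 0 ≤ E' → 0 ≤ I' →
      β * (1 - (l * E') ^ q / (M ^ q + (1 + w) * (l * E') ^ q)) * I' - l * E' = 0 →
      l * E' - γ * I' = 0 → E' = 0 ∧ I' = 0) :
    Tendsto (fun t => E t + I t) atTop atTop := by
  have hmono : Monotone fun t => E t + I t :=
    monotone_add_of_hasDerivAt (b := fun t => transmissionRate β l M q w (E t)) hE hI
      (fun t => (lt_transmissionRate hβ.le hl.le hM.le hw huncont (hEnn t)).le) hInn
  refine tendsto_atTop_atTop_of_monotone' hmono fun hbdd => ?_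
  obtain ⟨L, hL⟩ := hconv hbdd
  obtain ⟨p, ⟨hp1, hp2⟩, hp⟩ := exists_mapClusterPt_of_bddAbove_add atTop hEnn hInn hbdd
  obtain ⟨hpE, hpI⟩ := heq p.1 p.2 hp1 hp2 (hcluster p hp).1 (hcluster p hp).2
  have hL0 : L = 0 := by rw [← hp.add_eq_of_tendsto hL, hpE, hpI, add_zero]
  have h0L : E 0 + I 0 ≤ L :=
    ge_of_tendsto hL (eventually_atTop.mpr ⟨0, fun t ht => hmono ht⟩)
  linarith [hInn 0]

/-- In the uncontrolled regime, if every cluster point of the trajectory is an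
equilibrium and the only nonnegative equilibrium is the origin, then the total
infection level E + I tends to infinity. -/
theorem uncontrolled_total_infection_unbounded
    (β γ l M q w : ℝ) (hβ : 0 < β) (hγ : 0 < γ) (hl : 0 < l) (hM : 0 < M)
    (hq : 0 < q) (hw : 0 < w) (huncont : γ / w < β - γ)
    (E I : ℝ → ℝ)
    (hE : ∀ t, HasDerivAt E
      (β * (1 - (l * E t) ^ q / (M ^ q + (1 + w) * (l * E t) ^ q)) * I t - l * E t) t)
    (hI : ∀ t, HasDerivAt I (l * E t - γ * I t) t)
    (hEnn : ∀ t, 0 ≤ E t) (hInn : ∀ t, 0 ≤ I t)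
    (hE0 : 0 < E 0)
    (hconv : BddAbove (Set.range fun t => E t + I t) →
      ∃ L : ℝ, Tendsto (fun t => E t + I t) atTop (nhds L))
    (hcluster : ∀ p : ℝ × ℝ,
      MapClusterPt p atTop (fun t => (E t, I t)) →
      β * (1 - (l * p.1) ^ q / (M ^ q + (1 + w) * (l * p.1) ^ q)) * p.2 - l * p.1 = 0 ∧
      l * p.1 - γ * p.2 = 0)
    (heq : ∀ E' I' : ℝ, 0 ≤ E' → 0 ≤ I' →
      β * (1 - (l * E') ^ q / (M ^ q + (1 + w) * (l * E') ^ q)) * I' - l * E' = 0 →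
      l * E' - γ * I' = 0 → E' = 0 ∧ I' = 0)
    (hmono : StrictMonoOn (fun t => E t + I t) (Set.Ici (0 : ℝ))) :
    Tendsto (fun t => E t + I t) atTop atTop :=
  uncontrolled_total_infection_unbounded_general β γ l M q w hβ hl hM hw huncont E I hE hI hEnn hInn
    hE0 hconv hcluster heq
end
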